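/- arXiv:math/9801142 — 2 statements merged into one kernel-verified Lean document; each statement's English description precedes it below -/
import Mathlib

section
/- There do not exist C⁵ functions f, g defined in a neighborhood of the origin in ℝ² satisfying λ = (fλ)_x + (gλ)_y identically, where λ(x,y) = x⁶ + y⁶ + x²y². -/
noncomputable def lam : ℝ × ℝ → ℝ := fun p => p.1 ^ 6 + p.2 ^ 6 + p.1 ^ 2 * p.2 ^ 2

/-!
With `h = f_x + g_y`, the equation reads `f λ_x + g λ_y = λ (1 - h)`; we compare its lowest-order
terms along lines through the origin. On the `x`-axis it is `6 t⁵ f(t,0) = t⁶ (1 - h(t,0))`, so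
`f(0) = 0` and `6 f_x(0) = 1 - h(0)`; likewise `6 g_y(0) = 1 - h(0)`, and hence `h(0) = 1/4`.
On the lines `(t, ±t)` the `t⁴` terms give `2 (∂f(0) (1,±1) ± ∂g(0) (1,±1)) = 1 - h(0)`; adding the
two yields `3 h(0) = 1`.
-/

open Filter Topology

section Rays

variable {E : Type*} [NormedAddCommGroup E] [NormedSpace ℝ E]

lemma eventually_smul_mem_of_mem_nhds {U : Set E} (hU : U ∈ 𝓝 0) (w : E) :
    ∀ᶠ t in 𝓝[≠] (0 : ℝ), t • w ∈ U := by
  have : Tendsto (fun t : ℝ => t • w) (𝓝 0) (𝓝 0) :=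
    (continuous_id.smul continuous_const).tendsto' 0 0 (zero_smul ℝ w)
  exact (this.eventually_mem hU).filter_mono nhdsWithin_le_nhds

lemma ContinuousAt.tendsto_comp_smul {X : Type*} [TopologicalSpace X] {φ : E → X}
    (hφ : ContinuousAt φ 0) (w : E) :
    Tendsto (fun t : ℝ => φ (t • w)) (𝓝[≠] 0) (𝓝 (φ 0)) := by
  have : ContinuousAt (fun t : ℝ => φ (t • w)) 0 :=
    ContinuousAt.comp_of_eq hφ (by fun_prop) (zero_smul ℝ w)
  simpa using this.tendsto.mono_left nhdsWithin_le_nhds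

lemma HasFDerivAt.hasDerivAt_comp_smul {φ : E → ℝ} {φ' : E →L[ℝ] ℝ} (hφ : HasFDerivAt φ φ' 0)
    (w : E) : HasDerivAt (fun t : ℝ => φ (t • w)) (φ' w) 0 := by
  have hline : HasDerivAt (fun t : ℝ => t • w) w 0 := by
    simpa using (hasDerivAt_id (0 : ℝ)).smul_const w
  exact (zero_smul ℝ w ▸ hφ).comp_hasDerivAt 0 hline

end Rays

section OneVariable

variable {φ ψ : ℝ → ℝ}

lemma HasDerivAt.tendsto_div_self {φ' : ℝ} (hφ : HasDerivAt φ φ' 0) (h0 : φ 0 = 0) :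
    Tendsto (fun t => φ t / t) (𝓝[≠] 0) (𝓝 φ') := by
  simpa [h0, div_eq_inv_mul] using hφ.tendsto_slope_zero

lemma eq_zero_of_eventually_eq_mul (hφ : ContinuousAt φ 0) (hψ : ContinuousAt ψ 0)
    (h : ∀ᶠ t in 𝓝[≠] 0, φ t = t * ψ t) : φ 0 = 0 := by
  simpa using tendsto_nhds_unique_of_eventuallyEq (hφ.tendsto.mono_left nhdsWithin_le_nhds)
    ((continuousAt_id.mul hψ).tendsto.mono_left nhdsWithin_le_nhds) h

lemma HasDerivAt.eq_of_eventually_eq_mul {φ' : ℝ} (hφ : HasDerivAt φ φ' 0)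
    (hψ : ContinuousAt ψ 0) (h : ∀ᶠ t in 𝓝[≠] 0, φ t = t * ψ t) : φ' = ψ 0 := by
  have h0 := eq_zero_of_eventually_eq_mul hφ.continuousAt hψ h
  refine tendsto_nhds_unique_of_eventuallyEq (hφ.tendsto_div_self h0)
    (hψ.tendsto.mono_left nhdsWithin_le_nhds) ?_
  filter_upwards [h, self_mem_nhdsWithin] with t ht (ht0 : t ≠ 0)
  rw [ht, mul_div_cancel_left₀ _ ht0]

end OneVariable

lemma ContinuousLinearMap.apply_prod_eq (L : ℝ × ℝ →L[ℝ] ℝ) (u v : ℝ) :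
    L (u, v) = u * L (1, 0) + v * L (0, 1) := by
  have : ((u, v) : ℝ × ℝ) = u • (1, 0) + v • (0, 1) := by simp
  rw [this, map_add, map_smul, map_smul, smul_eq_mul, smul_eq_mul]

lemma hasFDerivAt_lam (p : ℝ × ℝ) :
    HasFDerivAt lam ((6 * p.1 ^ 5 + 2 * p.1 * p.2 ^ 2) • ContinuousLinearMap.fst ℝ ℝ ℝ
      + (6 * p.2 ^ 5 + 2 * p.1 ^ 2 * p.2) • ContinuousLinearMap.snd ℝ ℝ ℝ) p := by
  have h1 := hasFDerivAt_fst (𝕜 := ℝ) (p := p)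
  have h2 := hasFDerivAt_snd (𝕜 := ℝ) (p := p)
  refine (((h1.pow 6).add (h2.pow 6)).add ((h1.pow 2).mul (h2.pow 2))).congr_fderiv ?_
  ext <;> simp <;> ring

lemma fderiv_mul_lam_add_fderiv_mul_lam {f g : ℝ × ℝ → ℝ} {p : ℝ × ℝ}
    (hf : DifferentiableAt ℝ f p) (hg : DifferentiableAt ℝ g p) :
    fderiv ℝ (fun q => f q * lam q) p (1, 0) + fderiv ℝ (fun q => g q * lam q) p (0, 1)
      = f p * (6 * p.1 ^ 5 + 2 * p.1 * p.2 ^ 2) + g p * (6 * p.2 ^ 5 + 2 * p.1 ^ 2 * p.2)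
        + lam p * (fderiv ℝ f p (1, 0) + fderiv ℝ g p (0, 1)) := by
  have hlam := hasFDerivAt_lam p
  rw [fderiv_fun_mul hf hlam.differentiableAt, fderiv_fun_mul hg hlam.differentiableAt,
    hlam.fderiv]
  simp only [add_apply, smul_apply, smul_add,
    ContinuousLinearMap.coe_fst', ContinuousLinearMap.coe_snd', smul_eq_mul, mul_one, mul_zero,
    add_zero, zero_add]
  ring

section ReducedEquation

variable {U : Set (ℝ × ℝ)} {f g h : ℝ × ℝ → ℝ}
  (hsol : ∀ p ∈ U,
    f p * (6 * p.1 ^ 5 + 2 * p.1 * p.2 ^ 2) + g p * (6 * p.2 ^ 5 + 2 * p.1 ^ 2 * p.2)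
      = lam p * (1 - h p))
  (hU : U ∈ 𝓝 0)
include hsol hU

lemma eventually_fst_axis_eq :
    ∀ᶠ t in 𝓝[≠] (0 : ℝ), f (t • (1, 0)) = t * ((1 - h (t • (1, 0))) / 6) := by
  filter_upwards [eventually_smul_mem_of_mem_nhds hU (1, 0), self_mem_nhdsWithin] with t ht (ht0 : t ≠ 0)
  have key := hsol _ ht
  simp only [lam, Prod.smul_mk, smul_eq_mul, mul_one, mul_zero] at key ⊢
  apply mul_left_cancel₀ (pow_ne_zero 5 ht0)
  linear_combination key / 6

lemma eventually_snd_axis_eq :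
    ∀ᶠ t in 𝓝[≠] (0 : ℝ), g (t • (0, 1)) = t * ((1 - h (t • (0, 1))) / 6) := by
  filter_upwards [eventually_smul_mem_of_mem_nhds hU (0, 1), self_mem_nhdsWithin] with t ht (ht0 : t ≠ 0)
  have key := hsol _ ht
  simp only [lam, Prod.smul_mk, smul_eq_mul, mul_one, mul_zero] at key ⊢
  apply mul_left_cancel₀ (pow_ne_zero 5 ht0)
  linear_combination key / 6

lemma eventually_ray_eq (u v : ℝ) :
    ∀ᶠ t in 𝓝[≠] (0 : ℝ),
      f (t • (u, v)) / t * (t ^ 2 * (6 * u ^ 5) + 2 * u * v ^ 2)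
        + g (t • (u, v)) / t * (t ^ 2 * (6 * v ^ 5) + 2 * u ^ 2 * v)
      = (t ^ 2 * (u ^ 6 + v ^ 6) + u ^ 2 * v ^ 2) * (1 - h (t • (u, v))) := by
  filter_upwards [eventually_smul_mem_of_mem_nhds hU (u, v), self_mem_nhdsWithin] with t ht (ht0 : t ≠ 0)
  have key := hsol _ ht
  simp only [lam, Prod.smul_mk, smul_eq_mul] at key ⊢
  field_simp
  apply mul_left_cancel₀ (pow_ne_zero 3 ht0)
  linear_combination key

variable {f' g' : ℝ × ℝ →L[ℝ] ℝ} (hf : HasFDerivAt f f' 0) (hg : HasFDerivAt g g' 0)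
  (hh : ContinuousAt h 0)
include hf hg hh

lemma fderiv_ray_relation (hf0 : f 0 = 0) (hg0 : g 0 = 0) (u v : ℝ) :
    2 * u * v ^ 2 * f' (u, v) + 2 * u ^ 2 * v * g' (u, v) = u ^ 2 * v ^ 2 * (1 - h 0) := by
  have poly (c d : ℝ) : Tendsto (fun t : ℝ => t ^ 2 * c + d) (𝓝[≠] 0) (𝓝 d) := by
    have : Continuous (fun t : ℝ => t ^ 2 * c + d) := by fun_prop
    simpa using this.tendsto 0 |>.mono_left nhdsWithin_le_nhds
  have slope_f := (hf.hasDerivAt_comp_smul (u, v)).tendsto_div_self (by simpa using hf0)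
  have slope_g := (hg.hasDerivAt_comp_smul (u, v)).tendsto_div_self (by simpa using hg0)
  have lhs := (slope_f.mul (poly (6 * u ^ 5) (2 * u * v ^ 2))).add
    (slope_g.mul (poly (6 * v ^ 5) (2 * u ^ 2 * v)))
  have rhs := (poly (u ^ 6 + v ^ 6) (u ^ 2 * v ^ 2)).mul
    ((tendsto_const_nhds (x := (1 : ℝ))).sub (hh.tendsto_comp_smul (u, v)))
  have := tendsto_nhds_unique_of_eventuallyEq lhs rhs (eventually_ray_eq hsol hU u v)
  linear_combination this

lemma apply_zero_ne_fderiv_add_fderiv : h 0 ≠ f' (1, 0) + g' (0, 1) := by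
  have hψ (w : ℝ × ℝ) : ContinuousAt (fun t : ℝ => (1 - h (t • w)) / 6) 0 := by
    have : ContinuousAt (fun t : ℝ => h (t • w)) 0 :=
      ContinuousAt.comp_of_eq hh (by fun_prop) (zero_smul ℝ w)
    exact (continuousAt_const.sub this).div_const 6
  have hf0 := eq_zero_of_eventually_eq_mul (hf.hasDerivAt_comp_smul (1, 0)).continuousAt (hψ _)
    (eventually_fst_axis_eq hsol hU)
  have hg0 := eq_zero_of_eventually_eq_mul (hg.hasDerivAt_comp_smul (0, 1)).continuousAt (hψ _)
    (eventually_snd_axis_eq hsol hU)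
  have hfx := (hf.hasDerivAt_comp_smul (1, 0)).eq_of_eventually_eq_mul (hψ _)
    (eventually_fst_axis_eq hsol hU)
  have hgy := (hg.hasDerivAt_comp_smul (0, 1)).eq_of_eventually_eq_mul (hψ _)
    (eventually_snd_axis_eq hsol hU)
  simp only [zero_smul] at hf0 hg0 hfx hgy
  have diag := fderiv_ray_relation hsol hU hf hg hh hf0 hg0 1 1
  have antidiag := fderiv_ray_relation hsol hU hf hg hh hf0 hg0 1 (-1)
  rw [f'.apply_prod_eq, g'.apply_prod_eq] at diag antidiag
  intro hdiv
  linarith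

end ReducedEquation

/-- There do not exist C⁵ functions `f, g` defined in a neighborhood of the origin in ℝ²
satisfying `λ = (fλ)_x + (gλ)_y` identically, where `λ(x,y) = x⁶ + y⁶ + x²y²`. -/
theorem stmt_1 :
    ¬ ∃ (U : Set (ℝ × ℝ)) (f g : ℝ × ℝ → ℝ),
      IsOpen U ∧ (0, 0) ∈ U ∧
      ContDiffOn ℝ 5 f U ∧ ContDiffOn ℝ 5 g U ∧
      ∀ p ∈ U,
        fderiv ℝ (fun q => f q * lam q) p (1, 0)
          + fderiv ℝ (fun q => g q * lam q) p (0, 1) = lam p := by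
  rintro ⟨U, f, g, hU, h0, hf, hg, heq⟩
  have hU0 : U ∈ 𝓝 0 := hU.mem_nhds h0
  have hsol : ∀ p ∈ U, f p * (6 * p.1 ^ 5 + 2 * p.1 * p.2 ^ 2)
      + g p * (6 * p.2 ^ 5 + 2 * p.1 ^ 2 * p.2)
      = lam p * (1 - (fderiv ℝ f p (1, 0) + fderiv ℝ g p (0, 1))) := by
    intro p hp
    have := heq p hp
    rw [fderiv_mul_lam_add_fderiv_mul_lam
      ((hf.differentiableOn (by norm_num)).differentiableAt (hU.mem_nhds hp))
      ((hg.differentiableOn (by norm_num)).differentiableAt (hU.mem_nhds hp))] at this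
    linear_combination this
  have hdiv : ContinuousAt (fun p => fderiv ℝ f p (1, 0) + fderiv ℝ g p (0, 1)) 0 := by
    have hDf := (hf.contDiffAt hU0).continuousAt_fderiv (by norm_num)
    have hDg := (hg.contDiffAt hU0).continuousAt_fderiv (by norm_num)
    fun_prop
  exact apply_zero_ne_fderiv_add_fderiv hsol hU0
    ((hf.contDiffAt hU0).differentiableAt (by norm_num)).hasFDerivAt
    ((hg.contDiffAt hU0).differentiableAt (by norm_num)).hasFDerivAt hdiv rfl
end

section
/- If f, g are C⁵ functions near the origin in ℝ² with λ = (fλ)_x + (gλ)_y where λ(x,y) = x⁶ + y⁶ + x²y², then f(0,0) = 0 and g(0,0) = 0. -/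
/-!
On a line `y = e x` with `e² = 1` we have `λ = t⁴(2t² + 1)` and `∇λ = 2t³(3t² + 1)(1, e)`.
Expanding `(fλ)_x + (gλ)_y = λ` there and dividing by `t³` gives, for `t ≠ 0`,
`t(2t² + 1)(f_x + g_y - 1) + 2(3t² + 1)(f + e g) = 0`, whose left side is continuous in `t`;
at `t = 0` this says `f(0) + e g(0) = 0`, and `e = ±1` gives both claims.
-/

open Filter Topology

lemma fderiv_mul_lam_apply {f : ℝ × ℝ → ℝ} {p : ℝ × ℝ} (hf : DifferentiableAt ℝ f p)
    (v : ℝ × ℝ) :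
    fderiv ℝ (fun q => f q * lam q) p v = f p * ((6 * p.1 ^ 5 + 2 * p.1 * p.2 ^ 2) * v.1
      + (6 * p.2 ^ 5 + 2 * p.1 ^ 2 * p.2) * v.2) + lam p * fderiv ℝ f p v := by
  rw [fderiv_fun_mul hf (hasFDerivAt_lam p).differentiableAt, (hasFDerivAt_lam p).fderiv]
  simp only [add_apply, smul_apply, ContinuousLinearMap.coe_fst', ContinuousLinearMap.coe_snd',
    smul_eq_mul]

lemma ContinuousAt.eq_zero_of_pow_mul_eventually_eq_zero {H : ℝ → ℝ} (hH : ContinuousAt H 0)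
    (n : ℕ) (h : ∀ᶠ t in 𝓝[≠] 0, t ^ n * H t = 0) : H 0 = 0 := by
  have hzero : H =ᶠ[𝓝[≠] 0] fun _ => 0 := by
    filter_upwards [h, self_mem_nhdsWithin] with t ht ht0
    exact (mul_eq_zero.mp ht).resolve_left (pow_ne_zero n ht0)
  exact tendsto_nhds_unique (hH.tendsto.mono_left nhdsWithin_le_nhds)
    (tendsto_const_nhds.congr' hzero.symm)

lemma add_mul_eq_zero_of_divergence_eq_lam {U : Set (ℝ × ℝ)} {f g : ℝ × ℝ → ℝ}
    (hU : IsOpen U) (h0 : (0, 0) ∈ U) (hf : ContDiffOn ℝ 1 f U) (hg : ContDiffOn ℝ 1 g U)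
    (heq : ∀ p ∈ U,
      fderiv ℝ (fun q => f q * lam q) p (1, 0)
        + fderiv ℝ (fun q => g q * lam q) p (0, 1) = lam p)
    {e : ℝ} (he : e ^ 2 = 1) : f (0, 0) + e * g (0, 0) = 0 := by
  have hγ : Tendsto (fun t : ℝ => (t, e * t)) (𝓝 0) (𝓝 (0, 0)) := by
    simpa using (continuous_id.prodMk (continuous_const_mul e)).tendsto 0
  have along : ∀ {φ : ℝ × ℝ → ℝ}, ContinuousOn φ U → ContinuousAt (fun t => φ (t, e * t)) 0 :=
    fun hφ => (hφ.continuousAt (hU.mem_nhds h0)).comp_of_eq (by fun_prop) (by simp)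
  set H : ℝ → ℝ := fun t => t * (2 * t ^ 2 + 1)
      * (fderiv ℝ f (t, e * t) (1, 0) + fderiv ℝ g (t, e * t) (0, 1) - 1)
      + 2 * (3 * t ^ 2 + 1) * (f (t, e * t) + e * g (t, e * t)) with hH
  have hHc : ContinuousAt H 0 := by
    have hA : ContinuousAt
        (fun t => fderiv ℝ f (t, e * t) (1, 0) + fderiv ℝ g (t, e * t) (0, 1) - 1) 0 :=
      along ((((hf.continuousOn_fderiv_of_isOpen hU le_rfl).clm_apply continuousOn_const).add
        ((hg.continuousOn_fderiv_of_isOpen hU le_rfl).clm_apply continuousOn_const)).sub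
        continuousOn_const)
    have hB : ContinuousAt (fun t => f (t, e * t) + e * g (t, e * t)) 0 :=
      along (hf.continuousOn.add (continuousOn_const.mul hg.continuousOn))
    exact ((by fun_prop : ContinuousAt (fun t : ℝ => t * (2 * t ^ 2 + 1)) 0).mul hA).add
      ((by fun_prop : ContinuousAt (fun t : ℝ => 2 * (3 * t ^ 2 + 1)) 0).mul hB)
  have hHeq : ∀ᶠ t in 𝓝[≠] 0, t ^ 3 * H t = 0 := by
    refine nhdsWithin_le_nhds ((hγ.eventually (hU.mem_nhds h0)).mono fun t ht => ?_)
    have hdiff : ∀ {φ : ℝ × ℝ → ℝ}, ContDiffOn ℝ 1 φ U → DifferentiableAt ℝ φ (t, e * t) :=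
      fun hφ => (hφ.differentiableOn one_ne_zero).differentiableAt (hU.mem_nhds ht)
    have h := heq _ ht
    rw [fderiv_mul_lam_apply (hdiff hf), fderiv_mul_lam_apply (hdiff hg)] at h
    simp only [lam, hH] at h ⊢
    -- the two sides agree only modulo `e² - 1`; the bracket is the quotient
    linear_combination h - (2 * t ^ 3 * f (t, e * t) + 6 * e * t ^ 5 * (e ^ 2 + 1) * g (t, e * t)
      + (t ^ 6 * (e ^ 4 + e ^ 2 + 1) + t ^ 4)
        * (fderiv ℝ f (t, e * t) (1, 0) + fderiv ℝ g (t, e * t) (0, 1) - 1)) * he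
  have := hHc.eq_zero_of_pow_mul_eventually_eq_zero 3 hHeq
  norm_num [hH] at this
  linarith

/-- If `f, g` are C⁵ functions near the origin in ℝ² with `λ = (fλ)_x + (gλ)_y`, where
`λ(x,y) = x⁶ + y⁶ + x²y²`, then `f(0,0) = 0` and `g(0,0) = 0`. -/
theorem stmt_2 (U : Set (ℝ × ℝ)) (f g : ℝ × ℝ → ℝ)
    (hU : IsOpen U) (h0 : (0, 0) ∈ U)
    (hf : ContDiffOn ℝ 5 f U) (hg : ContDiffOn ℝ 5 g U)
    (heq : ∀ p ∈ U,
      fderiv ℝ (fun q => f q * lam q) p (1, 0)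
        + fderiv ℝ (fun q => g q * lam q) p (0, 1) = lam p) :
    f (0, 0) = 0 ∧ g (0, 0) = 0 := by
  have hdiag := add_mul_eq_zero_of_divergence_eq_lam hU h0 (hf.of_le (by norm_num))
    (hg.of_le (by norm_num)) heq (e := 1) (by norm_num)
  have hanti := add_mul_eq_zero_of_divergence_eq_lam hU h0 (hf.of_le (by norm_num))
    (hg.of_le (by norm_num)) heq (e := -1) (by norm_num)
  constructor <;> linarith
end
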